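/- Let (v,x) have a normal basis {v_{ij}} of type (μ;ν), and let E^x = {y ∈ End(V) : xy = yx}. Then E^x v = span{v_{ij} : 1 ≤ i ≤ ℓ(μ), 1 ≤ j ≤ μ_i}; in particular dim(E^x v) = |μ|. -/

import Mathlib

/-- A partition: a nonincreasing sequence of nonnegative integers (indexed from 0)
with finitely many nonzero terms. -/
def IsPartition (f : ℕ → ℕ) : Prop :=
  Antitone f ∧ (Function.support f).Finite

/-- The size `|f| = Σ_i f_i` of a partition. -/
noncomputable def psize (f : ℕ → ℕ) : ℕ := ∑ᶠ i, f i

/-- `nFn f = Σ_{i≥1} (i-1) f_i`, written with 0-indexing as `Σ_i i * f i`. -/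
noncomputable def nFn (f : ℕ → ℕ) : ℕ := ∑ᶠ i, i * f i

/-- Index set of the diagram of `μ + ν`: pairs `(i,j)` (0-indexed row `i`,
position `j`) with `j < μ_i + ν_i`. -/
def BipIdx (μ ν : ℕ → ℕ) : Type := {p : ℕ × ℕ // p.2 < μ p.1 + ν p.1}

/-- `b` is a normal basis of type `(μ;ν)` for `(v,x)`: it is a Jordan basis for `x`
of shape `μ + ν` (so `x b_{i,j} = b_{i,j-1}` and `x b_{i,0} = 0`), and
`v = Σ_{i : μ_i > 0} b_{i, μ_i - 1}`. -/
def IsNormalBasis {F V : Type*} [Field F] [AddCommGroup V] [Module F V]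
    (μ ν : ℕ → ℕ) (v : V) (x : Module.End F V) (b : Module.Basis (BipIdx μ ν) F V) : Prop :=
  (∀ p : BipIdx μ ν,
    x (b p) = if p.1.2 = 0 then 0
      else b ⟨(p.1.1, p.1.2 - 1), lt_of_le_of_lt (Nat.sub_le _ _) p.2⟩) ∧
  v = ∑ᶠ i : {i : ℕ // 0 < μ i},
        b ⟨(i.1, μ i.1 - 1),
           lt_of_lt_of_le (Nat.sub_lt i.2 Nat.one_pos) (Nat.le_add_right _ _)⟩

/-!
Write `v = ∑ᵢ b(i, μᵢ - 1) = ∑ᵢ x^{νᵢ} b(i, μᵢ + νᵢ - 1)`. If `y` commutes with `x`, then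
`y v = ∑ᵢ x^{νᵢ} wᵢ` with `x^{μᵢ+νᵢ} wᵢ = 0`, so the coordinates of `wᵢ` vanish at heights
`≥ μᵢ + νᵢ`; because `μ` and `ν` are nonincreasing, shifting down by `νᵢ` leaves only coordinates
in the `μ`-part of each row. Conversely `b(i, j) = x^{μᵢ-1-j} πᵢ v`, where `πᵢ` is the projection
onto the `i`-th Jordan block, which commutes with `x`. The `μ`-part of the diagram has `|μ|` cells.
-/

namespace BipIdx

variable {μ ν : ℕ → ℕ}

@[ext]
lemma ext {p q : BipIdx μ ν} (h₁ : p.1.1 = q.1.1) (h₂ : p.1.2 = q.1.2) : p = q :=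
  Subtype.ext (Prod.ext h₁ h₂)

def mk (i j : ℕ) (h : j < μ i + ν i) : BipIdx μ ν := ⟨(i, j), h⟩

@[simp] lemma mk_val (i j : ℕ) (h : j < μ i + ν i) : (mk i j h : BipIdx μ ν).1 = (i, j) := rfl

/-- The cell `n` places below `p` in its row (the bottom cell if `n` exceeds the height of `p`). -/
def lower (p : BipIdx μ ν) (n : ℕ) : BipIdx μ ν :=
  ⟨(p.1.1, p.1.2 - n), lt_of_le_of_lt (Nat.sub_le _ _) p.2⟩

@[simp] lemma lower_fst (p : BipIdx μ ν) (n : ℕ) : (p.lower n).1.1 = p.1.1 := rfl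

@[simp] lemma lower_snd (p : BipIdx μ ν) (n : ℕ) : (p.lower n).1.2 = p.1.2 - n := rfl

def muTop (i : ℕ) (hi : 0 < μ i) : BipIdx μ ν :=
  ⟨(i, μ i - 1), lt_of_lt_of_le (Nat.sub_lt hi Nat.one_pos) (Nat.le_add_right _ _)⟩

@[simp] lemma muTop_val (i : ℕ) (hi : 0 < μ i) : (muTop i hi : BipIdx μ ν).1 = (i, μ i - 1) := rfl

def top (i : ℕ) (hi : 0 < μ i) : BipIdx μ ν :=
  ⟨(i, μ i + ν i - 1), show μ i + ν i - 1 < μ i + ν i by omega⟩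

@[simp] lemma top_val (i : ℕ) (hi : 0 < μ i) : (top i hi : BipIdx μ ν).1 = (i, μ i + ν i - 1) :=
  rfl

def muCells (μ ν : ℕ → ℕ) : Set (BipIdx μ ν) := {p | p.1.2 < μ p.1.1}

end BipIdx

open BipIdx

lemma natCard_subtype_snd_lt_eq_finsum (f : ℕ → ℕ) (hf : (Function.support f).Finite) :
    Nat.card {p : ℕ × ℕ // p.2 < f p.1} = ∑ᶠ i, f i := by
  obtain ⟨N, hN⟩ := hf.bddAbove
  have hsupp : Function.support f ⊆ Finset.range (N + 1) := fun i hi =>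
    Finset.mem_range.mpr (Nat.lt_succ_of_le (hN hi))
  let e : {p : ℕ × ℕ // p.2 < f p.1} ≃ Σ i : Fin (N + 1), Fin (f i) :=
    { toFun := fun p => ⟨⟨p.1.1, Nat.lt_succ_of_le (hN (Nat.ne_zero_of_lt p.2))⟩, ⟨p.1.2, p.2⟩⟩
      invFun := fun c => ⟨(c.1, c.2), c.2.2⟩
      left_inv := fun _ => rfl
      right_inv := fun _ => rfl }
  rw [Nat.card_congr e, Nat.card_eq_fintype_card, Fintype.card_sigma,
    finsum_eq_sum_of_support_subset f hsupp]
  simp only [Fintype.card_fin]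
  exact Fin.sum_univ_eq_sum_range f (N + 1)

lemma finrank_span_image_muCells {R V : Type*} [Ring R] [StrongRankCondition R] [AddCommGroup V]
    [Module R V] {μ ν : ℕ → ℕ} (b : Module.Basis (BipIdx μ ν) R V)
    (hμ : (Function.support μ).Finite) :
    Module.finrank R (Submodule.span R (b '' muCells μ ν)) = psize μ := by
  let e : muCells μ ν ≃ {p : ℕ × ℕ // p.2 < μ p.1} :=
    Equiv.subtypeSubtypeEquivSubtype (p := fun p : ℕ × ℕ => p.2 < μ p.1 + ν p.1)
      fun h => Nat.lt_add_right _ h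
  have hcard : Nat.card (muCells μ ν) = psize μ :=
    (Nat.card_congr e).trans (natCard_subtype_snd_lt_eq_finsum μ hμ)
  have := nontrivial_of_invariantBasisNumber R
  have hli := b.linearIndependent.comp _ (Subtype.val_injective (p := (· ∈ muCells μ ν)))
  rw [Set.image_eq_range]
  change Cardinal.toNat (Module.rank R (Submodule.span R (Set.range (b ∘ Subtype.val)))) = _
  rw [rank_span hli, ← hcard, ← Nat.card_range_of_injective hli.injective]
  rfl

lemma mem_ker_mulLeft_sub_mulRight {R A : Type*} [CommRing R] [Ring A] [Algebra R A] {x y : A} :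
    y ∈ LinearMap.ker (LinearMap.mulLeft R x - LinearMap.mulRight R x) ↔ Commute x y := by
  rw [LinearMap.mem_ker, LinearMap.sub_apply, LinearMap.mulLeft_apply, LinearMap.mulRight_apply,
    sub_eq_zero]
  rfl

section JordanBasis

variable {R V : Type*} [Semiring R] [AddCommMonoid V] [Module R V] {μ ν : ℕ → ℕ}

def IsJordanBasis (x : Module.End R V) (b : Module.Basis (BipIdx μ ν) R V) : Prop :=
  ∀ p, x (b p) = if p.1.2 = 0 then 0 else b (p.lower 1)

/-- The coordinate at the position `(i, j)`, extended by zero outside the diagram. -/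
noncomputable def cellCoord (b : Module.Basis (BipIdx μ ν) R V) (i j : ℕ) : V →ₗ[R] R :=
  if h : j < μ i + ν i then b.coord (BipIdx.mk i j h) else 0

variable {x : Module.End R V} {b : Module.Basis (BipIdx μ ν) R V}

lemma cellCoord_basis (i j : ℕ) (q : BipIdx μ ν) :
    cellCoord b i j (b q) = if q.1.1 = i ∧ q.1.2 = j then 1 else 0 := by
  classical
  by_cases h : j < μ i + ν i
  · rw [cellCoord, dif_pos h, Module.Basis.coord_apply, Module.Basis.repr_self_apply]
    simp only [BipIdx.ext_iff, mk_val, eq_comm]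
  · rw [cellCoord, dif_neg h, LinearMap.zero_apply, if_neg]
    rintro ⟨rfl, rfl⟩
    exact h q.2

lemma repr_eq_cellCoord (w : V) (p : BipIdx μ ν) : b.repr w p = cellCoord b p.1.1 p.1.2 w := by
  rw [cellCoord, dif_pos p.2]
  rfl

lemma IsJordanBasis.pow_apply (hx : IsJordanBasis x b) (n : ℕ) (p : BipIdx μ ν) :
    (x ^ n) (b p) = if n ≤ p.1.2 then b (p.lower n) else 0 := by
  induction n with
  | zero => simp only [pow_zero, Module.End.one_apply, zero_le, if_true]; rfl
  | succ n ih =>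
    rw [pow_succ', Module.End.mul_apply, ih]
    split_ifs with hn hn' hn'
    · rw [hx, if_neg (by simp; omega)]
      congr 1
    · rw [hx, if_pos (by simp; omega)]
    · omega
    · exact map_zero x

lemma IsJordanBasis.cellCoord_pow_apply (hx : IsJordanBasis x b) (n i j : ℕ) (w : V) :
    cellCoord b i j ((x ^ n) w) = cellCoord b i (j + n) w := by
  suffices cellCoord b i j ∘ₗ (x ^ n) = cellCoord b i (j + n) from LinearMap.congr_fun this w
  refine b.ext fun q => ?_
  rw [LinearMap.comp_apply, hx.pow_apply]
  split_ifs with hn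
  · simp only [cellCoord_basis, lower_fst, lower_snd]
    congr 1
    apply propext
    omega
  · rw [map_zero, cellCoord_basis, if_neg (by omega)]

lemma IsJordanBasis.cellCoord_eq_zero_of_pow_eq_zero (hx : IsJordanBasis x b) {m i j : ℕ}
    {w : V} (hw : (x ^ m) w = 0) (hj : m ≤ j) : cellCoord b i j w = 0 := by
  rw [← Nat.sub_add_cancel hj, ← hx.cellCoord_pow_apply, hw, map_zero]

lemma IsJordanBasis.pow_mem_span_muCells (hx : IsJordanBasis x b) (hμ : Antitone μ)
    (hν : Antitone ν) {i : ℕ} {w : V} (hw : (x ^ (μ i + ν i)) w = 0) :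
    (x ^ ν i) w ∈ Submodule.span R (b '' muCells μ ν) := by
  rw [Module.Basis.mem_span_image]
  intro r hr
  by_contra hrμ
  replace hrμ : μ r.1.1 ≤ r.1.2 := not_lt.mp hrμ
  refine Finsupp.mem_support_iff.mp hr ?_
  rw [repr_eq_cellCoord, hx.cellCoord_pow_apply]
  rcases le_or_gt (μ i) (μ r.1.1) with hle | hlt
  · exact hx.cellCoord_eq_zero_of_pow_eq_zero hw (by omega)
  · -- `μ` is nonincreasing, so row `r.1.1` comes after row `i` and is too short for `r.1.2 + ν i`
    have hνr : ν r.1.1 ≤ ν i := hν (hμ.reflect_lt hlt).le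
    rw [cellCoord, dif_neg (by omega), LinearMap.zero_apply]

lemma IsJordanBasis.apply_muTop_mem_span (hx : IsJordanBasis x b) (hμ : Antitone μ)
    (hν : Antitone ν) {y : Module.End R V} (hy : Commute x y) {i : ℕ} (hi : 0 < μ i) :
    y (b (muTop i hi)) ∈ Submodule.span R (b '' muCells μ ν) := by
  have htop : b (muTop i hi) = (x ^ ν i) (b (top i hi)) := by
    rw [hx.pow_apply, if_pos (by simp; omega)]
    congr 1
    ext <;> simp
    omega
  have hkill : (x ^ (μ i + ν i)) (y (b (top i hi))) = 0 := by
    rw [← Module.End.mul_apply, (hy.pow_left _).eq, Module.End.mul_apply, hx.pow_apply,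
      if_neg (by simp; omega), map_zero]
  rw [htop, ← Module.End.mul_apply, ← (hy.pow_left _).eq, Module.End.mul_apply]
  exact hx.pow_mem_span_muCells hμ hν hkill

end JordanBasis

section RowProjection

variable {R V : Type*} [CommSemiring R] [AddCommMonoid V] [Module R V] {μ ν : ℕ → ℕ}
  {x : Module.End R V} {b : Module.Basis (BipIdx μ ν) R V}

noncomputable def rowProj (b : Module.Basis (BipIdx μ ν) R V) (i : ℕ) : Module.End R V :=
  b.constr R fun q => if q.1.1 = i then b q else 0

lemma rowProj_basis (i : ℕ) (q : BipIdx μ ν) :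
    rowProj b i (b q) = if q.1.1 = i then b q else 0 :=
  b.constr_basis R _ q

lemma IsJordanBasis.commute_rowProj (hx : IsJordanBasis x b) (i : ℕ) :
    Commute x (rowProj b i) := by
  refine b.ext fun q => ?_
  rw [Module.End.mul_apply, Module.End.mul_apply, rowProj_basis, hx q]
  split_ifs <;> simp_all [rowProj_basis, hx q]

end RowProjection

section NormalBasis

variable {F V : Type*} [Field F] [AddCommGroup V] [Module F V] {μ ν : ℕ → ℕ} {v : V}
  {x : Module.End F V} {b : Module.Basis (BipIdx μ ν) F V}

lemma IsNormalBasis.isJordanBasis (hb : IsNormalBasis μ ν v x b) : IsJordanBasis x b := hb.1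

theorem IsNormalBasis.map_applyₗ_centralizer (hb : IsNormalBasis μ ν v x b)
    (hμ : IsPartition μ) (hν : Antitone ν) :
    Submodule.map (LinearMap.applyₗ v : Module.End F V →ₗ[F] V)
        (LinearMap.ker (LinearMap.mulLeft F x - LinearMap.mulRight F x)) =
      Submodule.span F (b '' muCells μ ν) := by
  have hx := hb.isJordanBasis
  obtain ⟨-, hv⟩ := hb
  have : Finite {i // 0 < μ i} := (hμ.2.subset fun i hi => (Nat.pos_iff_ne_zero.mp hi)).to_subtype
  have := Fintype.ofFinite {i // 0 < μ i}
  replace hv : v = ∑ i : {i // 0 < μ i}, b (muTop i.1 i.2) := by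
    rw [hv, finsum_eq_sum_of_fintype]
    rfl
  apply le_antisymm
  · rintro _ ⟨y, hy, rfl⟩
    rw [SetLike.mem_coe, mem_ker_mulLeft_sub_mulRight] at hy
    rw [LinearMap.applyₗ_apply_apply, hv, map_sum]
    exact Submodule.sum_mem _ fun i _ => hx.apply_muTop_mem_span hμ.1 hν hy i.2
  · rw [Submodule.span_le]
    rintro _ ⟨p, hp : p.1.2 < μ p.1.1, rfl⟩
    have hpos : 0 < μ p.1.1 := lt_of_le_of_lt (Nat.zero_le _) hp
    refine ⟨x ^ (μ p.1.1 - 1 - p.1.2) * rowProj b p.1.1, ?_, ?_⟩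
    · rw [SetLike.mem_coe, mem_ker_mulLeft_sub_mulRight]
      exact ((Commute.refl x).pow_right _).mul_right (hx.commute_rowProj _)
    have hproj : rowProj b p.1.1 v = b (muTop p.1.1 hpos) := by
      rw [hv, map_sum, Finset.sum_eq_single ⟨p.1.1, hpos⟩]
      · simp [rowProj_basis]
      · rintro i - hi
        simp only [rowProj_basis, muTop_val]
        exact if_neg fun h => hi (Subtype.ext h)
      · exact fun h => absurd (Finset.mem_univ _) h
    rw [LinearMap.applyₗ_apply_apply, Module.End.mul_apply, hproj, hx.pow_apply,
      if_pos (by simp)]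
    congr 1
    ext <;> simp
    omega

end NormalBasis

theorem centralizer_orbit_of_v_general {F V : Type*} [Field F] [AddCommGroup V] [Module F V]
    (μ ν : ℕ → ℕ) (hμ : IsPartition μ) (hν : IsPartition ν)
    (v : V) (x : Module.End F V) (b : Module.Basis (BipIdx μ ν) F V)
    (hb : IsNormalBasis μ ν v x b) :
    Submodule.map ((LinearMap.applyₗ v : Module.End F V →ₗ[F] V))
        (LinearMap.ker (LinearMap.mulLeft F x - LinearMap.mulRight F x)) =
      Submodule.span F {w : V | ∃ p : BipIdx μ ν, p.1.2 < μ p.1.1 ∧ w = b p} ∧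
    Module.finrank F
      ↥(Submodule.map ((LinearMap.applyₗ v : Module.End F V →ₗ[F] V))
        (LinearMap.ker (LinearMap.mulLeft F x - LinearMap.mulRight F x))) = psize μ := by
  have hcells : {w : V | ∃ p : BipIdx μ ν, p.1.2 < μ p.1.1 ∧ w = b p} = b '' muCells μ ν := by
    ext w
    exact ⟨fun ⟨p, hp, hw⟩ => ⟨p, hp, hw.symm⟩, fun ⟨p, hp, hw⟩ => ⟨p, hp, hw.symm⟩⟩
  rw [hcells, hb.map_applyₗ_centralizer hμ hν.1]
  exact ⟨rfl, finrank_span_image_muCells b hμ.2⟩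

/-- If `b` is a normal basis of type `(μ;ν)` for `(v,x)`, then
`E^x v = span{b_{ij} : 1 ≤ i ≤ ℓ(μ), j ≤ μ_i}`; in particular `dim (E^x v) = |μ|`. -/
theorem centralizer_orbit_of_v {F V : Type*} [Field F] [AddCommGroup V] [Module F V]
    [FiniteDimensional F V]
    (μ ν : ℕ → ℕ) (hμ : IsPartition μ) (hν : IsPartition ν)
    (v : V) (x : Module.End F V) (b : Module.Basis (BipIdx μ ν) F V)
    (hb : IsNormalBasis μ ν v x b) :
    Submodule.map ((LinearMap.applyₗ v : Module.End F V →ₗ[F] V))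
        (LinearMap.ker (LinearMap.mulLeft F x - LinearMap.mulRight F x)) =
      Submodule.span F {w : V | ∃ p : BipIdx μ ν, p.1.2 < μ p.1.1 ∧ w = b p} ∧
    Module.finrank F
      ↥(Submodule.map ((LinearMap.applyₗ v : Module.End F V →ₗ[F] V))
        (LinearMap.ker (LinearMap.mulLeft F x - LinearMap.mulRight F x))) = psize μ :=
  centralizer_orbit_of_v_general μ ν hμ hν v x b hb
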